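/- Let f be differentiable on I° with f' integrable on [a,b], a < b, q > 1 with 1/p+1/q = 1, and |f'|^q s-convex in the second sense on [a,b] for s ∈ (0,1]. Then |f((a+b)/2) - (1/(b-a))∫ₐᵇ f(x)dx| ≤ ((b-a)/4)(1/(p+1))^{1/p} · { ((|f'((a+b)/2)|^q + |f'(a)|^q)/(s+1))^{1/q} + ((|f'((a+b)/2)|^q + |f'(b)|^q)/(s+1))^{1/q} }. -/

import Mathlib

open MeasureTheory Set intervalIntegral

/-!
Integrating by parts against the kernel `x - a` on `[a, m]` and `x - b` on `[m, b]` (`m` the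
midpoint) turns `(b - a)` times the left-hand side into `|∫ₐᵐ (x - a) f' + ∫ₘᵇ (x - b) f'|`.
On each half, Hölder's inequality with exponents `p, q` splits off the weight, whose `Lᵖ`-norm is
explicit, and the Hermite–Hadamard-type bound `∫_c^d φ ≤ (d - c) (φ c + φ d) / (s + 1)` for the
`s`-convex function `φ = |f'|^q` controls the `Lᵠ`-norm of `f'`. The half `[m, b]` reduces to a
half of the first kind through the reflection `x ↦ m + b - x`.
-/

theorem integral_comp_add_sub_eq (f : ℝ → ℝ) (c d : ℝ) :
    ∫ x in c..d, f (c + d - x) = ∫ x in c..d, f x := by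
  simp [integral_comp_sub_left]

section IntervalIntegrals

variable {c d r : ℝ}

theorem integral_sub_rpow (hr : -1 < r) :
    ∫ x in c..d, (x - c) ^ r = (d - c) ^ (r + 1) / (r + 1) := by
  rw [integral_comp_sub_right (fun y => y ^ r), sub_self,
    integral_rpow (Or.inl hr), Real.zero_rpow (by linarith), sub_zero]

theorem integral_sub_div_rpow (hcd : c < d) (hr : -1 < r) :
    ∫ x in c..d, ((x - c) / (d - c)) ^ r = (d - c) / (r + 1) := by
  have hdc : 0 < d - c := sub_pos.2 hcd
  rw [integral_congr (g := fun x => (x - c) ^ r / (d - c) ^ r) fun x hx => ?_,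
    intervalIntegral.integral_div, integral_sub_rpow hr, Real.rpow_add_one hdc.ne']
  · field_simp
  · rw [uIcc_of_le hcd.le] at hx
    exact Real.div_rpow (by linarith [hx.1]) hdc.le r

theorem integral_div_sub_rpow (hcd : c < d) (hr : -1 < r) :
    ∫ x in c..d, ((d - x) / (d - c)) ^ r = (d - c) / (r + 1) := by
  rw [← integral_sub_div_rpow hcd hr, ← integral_comp_add_sub_eq]
  congr with x
  congr 2
  ring

end IntervalIntegrals

/-- `s`-convexity in the second sense (Breckner). -/
def SConvexOn (s : ℝ) (K : Set ℝ) (φ : ℝ → ℝ) : Prop :=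
  ∀ x ∈ K, ∀ y ∈ K, ∀ t ∈ Icc (0 : ℝ) 1,
    φ (t * x + (1 - t) * y) ≤ t ^ s * φ x + (1 - t) ^ s * φ y

namespace SConvexOn

variable {s c d : ℝ} {K L : Set ℝ} {φ : ℝ → ℝ}

theorem mono (h : SConvexOn s K φ) (hLK : L ⊆ K) : SConvexOn s L φ :=
  fun x hx y hy t ht => h x (hLK hx) y (hLK hy) t ht

theorem comp_const_sub (h : SConvexOn s K φ) (e : ℝ) :
    SConvexOn s ((e - ·) ⁻¹' K) (fun x => φ (e - x)) := by
  intro x hx y hy t ht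
  convert h _ hx _ hy t ht using 2
  ring

theorem le_of_mem_Icc (h : SConvexOn s (Icc c d) φ) (hcd : c < d) {x : ℝ} (hx : x ∈ Icc c d) :
    φ x ≤ ((x - c) / (d - c)) ^ s * φ d + ((d - x) / (d - c)) ^ s * φ c := by
  have hdc : 0 < d - c := sub_pos.2 hcd
  have ht : (x - c) / (d - c) ∈ Icc (0 : ℝ) 1 :=
    ⟨div_nonneg (by linarith [hx.1]) hdc.le, (div_le_one hdc).2 (by linarith [hx.2])⟩
  have key := h d (right_mem_Icc.2 hcd.le) c (left_mem_Icc.2 hcd.le) _ ht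
  rwa [show (x - c) / (d - c) * d + (1 - (x - c) / (d - c)) * c = x by field_simp; ring,
    show 1 - (x - c) / (d - c) = (d - x) / (d - c) by field_simp; ring] at key

theorem le_add (h : SConvexOn s (Icc c d) φ) (hs : 0 ≤ s) (hc : 0 ≤ φ c) (hd : 0 ≤ φ d)
    (hcd : c < d) {x : ℝ} (hx : x ∈ Icc c d) : φ x ≤ φ c + φ d := by
  have hdc : 0 < d - c := sub_pos.2 hcd
  have hl : ((x - c) / (d - c)) ^ s ≤ 1 :=
    Real.rpow_le_one (div_nonneg (by linarith [hx.1]) hdc.le)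
      ((div_le_one hdc).2 (by linarith [hx.2])) hs
  have hr : ((d - x) / (d - c)) ^ s ≤ 1 :=
    Real.rpow_le_one (div_nonneg (by linarith [hx.2]) hdc.le)
      ((div_le_one hdc).2 (by linarith [hx.1])) hs
  calc φ x ≤ ((x - c) / (d - c)) ^ s * φ d + ((d - x) / (d - c)) ^ s * φ c :=
        h.le_of_mem_Icc hcd hx
    _ ≤ 1 * φ d + 1 * φ c := by gcongr
    _ = φ c + φ d := by ring

/-- The right half of the Hermite–Hadamard inequality for `s`-convex functions. -/
theorem integral_le (h : SConvexOn s (Icc c d) φ) (hs : 0 ≤ s) (hcd : c < d)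
    (hφ : IntervalIntegrable φ volume c d) :
    ∫ x in c..d, φ x ≤ (d - c) * ((φ c + φ d) / (s + 1)) := by
  have hl : Continuous fun x => ((x - c) / (d - c)) ^ s :=
    (continuous_sub_right c).div_const _ |>.rpow_const fun _ => Or.inr hs
  have hr : Continuous fun x => ((d - x) / (d - c)) ^ s :=
    (continuous_sub_left d).div_const _ |>.rpow_const fun _ => Or.inr hs
  calc ∫ x in c..d, φ x
      ≤ ∫ x in c..d, (((x - c) / (d - c)) ^ s * φ d + ((d - x) / (d - c)) ^ s * φ c) :=
        integral_mono_on hcd.le hφ (((hl.mul_const _).add (hr.mul_const _)).intervalIntegrable _ _)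
          fun x hx => h.le_of_mem_Icc hcd hx
    _ = (d - c) * ((φ c + φ d) / (s + 1)) := by
        rw [integral_add ((hl.mul_const _).intervalIntegrable _ _)
            ((hr.mul_const _).intervalIntegrable _ _), intervalIntegral.integral_mul_const,
          intervalIntegral.integral_mul_const,
          integral_sub_div_rpow hcd (by linarith), integral_div_sub_rpow hcd (by linarith)]
        ring

end SConvexOn

theorem integral_sub_mul_abs_le {c d p q M : ℝ} {g : ℝ → ℝ} (hpq : p.HolderConjugate q)
    (hcd : c < d) (hg : MemLp g (ENNReal.ofReal q) (volume.restrict (Ioc c d)))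
    (hM : ∫ x in c..d, |g x| ^ q ≤ (d - c) * M) :
    ∫ x in c..d, (x - c) * |g x| ≤ (d - c) ^ 2 * (1 / (p + 1)) ^ (1 / p) * M ^ (1 / q) := by
  have hdc : 0 < d - c := sub_pos.2 hcd
  have hp : 1 < p := hpq.lt
  have hq : 1 < q := hpq.symm.lt
  have hweight : MemLp (fun x => x - c) (ENNReal.ofReal p) (volume.restrict (Ioc c d)) := by
    refine MemLp.of_bound (by fun_prop) (d - c) ?_
    filter_upwards [ae_restrict_mem measurableSet_Ioc] with x hx
    rw [Real.norm_eq_abs, abs_of_nonneg (by linarith [hx.1])]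
    linarith [hx.2]
  have holder := integral_mul_le_Lp_mul_Lq_of_nonneg hpq
    ((ae_restrict_mem measurableSet_Ioc).mono fun x (hx : x ∈ Ioc c d) => sub_nonneg.2 hx.1.le)
    (.of_forall fun x => abs_nonneg (g x)) hweight hg.abs
  simp only [← intervalIntegral.integral_of_le hcd.le, integral_sub_rpow (by linarith : -1 < p)]
    at holder
  have hgq : 0 ≤ ∫ x in c..d, |g x| ^ q :=
    integral_nonneg hcd.le fun x _ => by positivity
  have hM0 : 0 ≤ M := nonneg_of_mul_nonneg_right (hgq.trans hM) hdc
  have hexp : (p + 1) * (1 / p) + 1 / q = 2 := by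
    have := hpq.inv_add_inv_eq_one
    field_simp at this ⊢
    linarith
  calc ∫ x in c..d, (x - c) * |g x|
      ≤ ((d - c) ^ (p + 1) / (p + 1)) ^ (1 / p) * ((d - c) * M) ^ (1 / q) := by
        refine holder.trans (mul_le_mul_of_nonneg_left ?_ (by positivity))
        exact Real.rpow_le_rpow hgq hM (by positivity)
    _ = (d - c) ^ ((p + 1) * (1 / p) + 1 / q) * (1 / (p + 1)) ^ (1 / p) * M ^ (1 / q) := by
        rw [div_eq_mul_one_div, Real.mul_rpow (by positivity) (by positivity),
          Real.mul_rpow hdc.le hM0, ← Real.rpow_mul hdc.le, Real.rpow_add hdc]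
        ring
    _ = (d - c) ^ 2 * (1 / (p + 1)) ^ (1 / p) * M ^ (1 / q) := by
        rw [hexp, Real.rpow_two]

theorem abs_integral_sub_left_mul_le {c d p q s : ℝ} {g : ℝ → ℝ} (hpq : p.HolderConjugate q)
    (hs : 0 ≤ s) (hcd : c < d) (hg : IntervalIntegrable g volume c d)
    (hconv : SConvexOn s (Icc c d) fun x => |g x| ^ q) :
    |∫ x in c..d, (x - c) * g x|
      ≤ (d - c) ^ 2 * (1 / (p + 1)) ^ (1 / p) * ((|g c| ^ q + |g d| ^ q) / (s + 1)) ^ (1 / q) := by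
  have hq : 0 < q := by linarith [hpq.symm.lt]
  have hbound : ∀ x ∈ Icc c d, |g x| ^ q ≤ |g c| ^ q + |g d| ^ q :=
    fun x hx => hconv.le_add hs (by positivity) (by positivity) hcd hx
  have hmem : MemLp g (ENNReal.ofReal q) (volume.restrict (Ioc c d)) := by
    refine MemLp.of_bound hg.1.aestronglyMeasurable ((|g c| ^ q + |g d| ^ q) ^ q⁻¹) ?_
    filter_upwards [ae_restrict_mem measurableSet_Ioc] with x hx
    rw [Real.norm_eq_abs, ← Real.rpow_rpow_inv (abs_nonneg (g x)) hq.ne']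
    exact Real.rpow_le_rpow (by positivity) (hbound x (Ioc_subset_Icc_self hx)) (by positivity)
  have hint : IntervalIntegrable (fun x => |g x| ^ q) volume c d := by
    refine (intervalIntegrable_iff_integrableOn_Ioc_of_le hcd.le).2 ?_
    have := hmem.integrable_norm_rpow'
    simp only [ENNReal.toReal_ofReal hq.le, Real.norm_eq_abs] at this
    exact this
  calc |∫ x in c..d, (x - c) * g x|
      ≤ ∫ x in c..d, |(x - c) * g x| := abs_integral_le_integral_abs hcd.le
    _ = ∫ x in c..d, (x - c) * |g x| := by
        refine integral_congr fun x hx => ?_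
        rw [uIcc_of_le hcd.le] at hx
        simp only [abs_mul, abs_of_nonneg (sub_nonneg.2 hx.1)]
    _ ≤ _ := integral_sub_mul_abs_le hpq hcd hmem (hconv.integral_le hs hcd hint)

theorem abs_integral_sub_right_mul_le {c d p q s : ℝ} {g : ℝ → ℝ} (hpq : p.HolderConjugate q)
    (hs : 0 ≤ s) (hcd : c < d) (hg : IntervalIntegrable g volume c d)
    (hconv : SConvexOn s (Icc c d) fun x => |g x| ^ q) :
    |∫ x in c..d, (x - d) * g x|
      ≤ (d - c) ^ 2 * (1 / (p + 1)) ^ (1 / p) * ((|g c| ^ q + |g d| ^ q) / (s + 1)) ^ (1 / q) := by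
  have hreflect : ∫ x in c..d, (x - d) * g x = -∫ x in c..d, (x - c) * g (c + d - x) := by
    rw [← integral_comp_add_sub_eq, ← intervalIntegral.integral_neg]
    congr with x
    ring
  have hg' : IntervalIntegrable (fun x => g (c + d - x)) volume c d := by
    simpa using (hg.comp_sub_left (c + d)).symm
  have hconv' : SConvexOn s (Icc c d) fun x => |g (c + d - x)| ^ q := by
    simpa [preimage_const_sub_Icc] using hconv.comp_const_sub (c + d)
  rw [hreflect, abs_neg, add_comm (|g c| ^ q)]
  simpa using abs_integral_sub_left_mul_le hpq hs hcd hg' hconv'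

theorem montgomery_identity {f f' : ℝ → ℝ} {a b m : ℝ}
    (hf : ∀ x ∈ Icc a b, HasDerivAt f (f' x) x) (hf' : IntervalIntegrable f' volume a b)
    (hm : m ∈ Icc a b) :
    (b - a) * f m - ∫ x in a..b, f x
      = (∫ x in a..m, (x - a) * f' x) + ∫ x in m..b, (x - b) * f' x := by
  have hab : a ≤ b := hm.1.trans hm.2
  have hcont : ContinuousOn f (Icc a b) := fun x hx => (hf x hx).continuousAt.continuousWithinAt
  have parts : ∀ {u v e : ℝ}, u ∈ Icc a b → v ∈ Icc a b →
      ∫ x in u..v, (x - e) * f' x = (v - e) * f v - (u - e) * f u - ∫ x in u..v, f x := by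
    intro u v e hu hv
    have huv := uIcc_subset_Icc hu hv
    simpa using integral_mul_deriv_eq_deriv_mul (fun x _ => (hasDerivAt_id x).sub_const e)
      (fun x hx => hf x (huv hx)) intervalIntegrable_const
      (hf'.mono_set (huv.trans Icc_subset_uIcc))
  have ha := left_mem_Icc.2 hab
  have hb := right_mem_Icc.2 hab
  rw [parts ha hm, parts hm hb, ← integral_add_adjacent_intervals
    ((hcont.mono (uIcc_subset_Icc ha hm)).intervalIntegrable)
    ((hcont.mono (uIcc_subset_Icc hm hb)).intervalIntegrable)]
  ring

theorem stmt_10_general (I : Set ℝ) (f f' : ℝ → ℝ) (a b s p q : ℝ)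
    (hab : a < b) (hI : Set.Icc a b ⊆ interior I)
    (hs : s ∈ Set.Ioc (0:ℝ) 1) (hq : 1 < q) (hpq : 1/p + 1/q = 1)
    (hder : ∀ x ∈ interior I, HasDerivAt f (f' x) x)
    (hint : IntervalIntegrable f' volume a b)
    (hconv : ∀ x ∈ Set.Icc a b, ∀ y ∈ Set.Icc a b, ∀ t ∈ Set.Icc (0:ℝ) 1,
      |f' (t * x + (1 - t) * y)| ^ q ≤ t ^ s * |f' x| ^ q + (1 - t) ^ s * |f' y| ^ q) :
    |f ((a + b)/2) - (1 / (b - a)) * ∫ x in a..b, f x|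
      ≤ ((b - a)/4) * (1/(p+1)) ^ (1/p) *
        (((|f' ((a + b)/2)| ^ q + |f' a| ^ q) / (s+1)) ^ (1/q)
          + ((|f' ((a + b)/2)| ^ q + |f' b| ^ q) / (s+1)) ^ (1/q)) := by
  set m := (a + b) / 2 with hm
  have hba : 0 < b - a := by linarith
  have hm_mem : m ∈ Icc a b := ⟨by linarith, by linarith⟩
  have hpq' : p.HolderConjugate q :=
    (Real.holderConjugate_iff.2 ⟨hq, by simpa only [one_div, add_comm] using hpq⟩).symm
  have hφ : SConvexOn s (Icc a b) fun x => |f' x| ^ q := hconv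
  have hleft := abs_integral_sub_left_mul_le hpq' hs.1.le (by linarith)
    (hint.mono_set (uIcc_subset_uIcc_left (Icc_subset_uIcc hm_mem)))
    (hφ.mono (Icc_subset_Icc_right hm_mem.2))
  have hright := abs_integral_sub_right_mul_le hpq' hs.1.le (by linarith)
    (hint.mono_set (uIcc_subset_uIcc_right (Icc_subset_uIcc hm_mem)))
    (hφ.mono (Icc_subset_Icc_left hm_mem.1))
  have hmean : f m - 1 / (b - a) * ∫ x in a..b, f x
      = ((b - a) * f m - ∫ x in a..b, f x) / (b - a) := by
    field_simp
  calc |f m - 1 / (b - a) * ∫ x in a..b, f x|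
      = |(∫ x in a..m, (x - a) * f' x) + ∫ x in m..b, (x - b) * f' x| / (b - a) := by
        rw [hmean, montgomery_identity (fun x hx => hder x (hI hx)) hint hm_mem, abs_div,
          abs_of_pos hba]
    _ ≤ (|∫ x in a..m, (x - a) * f' x| + |∫ x in m..b, (x - b) * f' x|) / (b - a) := by
        gcongr
        exact abs_add_le _ _
    _ ≤ _ := by
        rw [div_le_iff₀ hba]
        refine (add_le_add hleft hright).trans_eq ?_
        rw [add_comm (|f' a| ^ q), show m - a = (b - a) / 2 by ring,
          show b - m = (b - a) / 2 by ring]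
        ring

theorem stmt_10 (I : Set ℝ) (f f' : ℝ → ℝ) (a b s p q : ℝ)
    (hab : a < b) (hI0 : I ⊆ Set.Ici (0:ℝ)) (hI : Set.Icc a b ⊆ interior I)
    (hs : s ∈ Set.Ioc (0:ℝ) 1) (hq : 1 < q) (hpq : 1/p + 1/q = 1)
    (hder : ∀ x ∈ interior I, HasDerivAt f (f' x) x)
    (hint : IntervalIntegrable f' volume a b)
    (hconv : ∀ x ∈ Set.Icc a b, ∀ y ∈ Set.Icc a b, ∀ t ∈ Set.Icc (0:ℝ) 1,
      |f' (t * x + (1 - t) * y)| ^ q ≤ t ^ s * |f' x| ^ q + (1 - t) ^ s * |f' y| ^ q) :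
    |f ((a + b)/2) - (1 / (b - a)) * ∫ x in a..b, f x|
      ≤ ((b - a)/4) * (1/(p+1)) ^ (1/p) *
        (((|f' ((a + b)/2)| ^ q + |f' a| ^ q) / (s+1)) ^ (1/q)
          + ((|f' ((a + b)/2)| ^ q + |f' b| ^ q) / (s+1)) ^ (1/q)) :=
  stmt_10_general I f f' a b s p q hab hI hs hq hpq hder hint hconv
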